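/- Let K be a k-dimensional USO and h ∈ [k]. If P is a set of h-edges of K such that flipping exactly the edges of P yields a USO (P is a union of h-phases), then after performing the partial swap in dimension h on K, flipping the corresponding set P of h-edges in the swapped orientation again yields a USO. In particular, partial swaps preserve unions of h-phases. -/
import Mathlib


open scoped Classical

/-- The neighbor of `v` across the `i`-edge. -/
def flipV {k : ℕ} (v : Fin k → Bool) (i : Fin k) : Fin k → Bool :=
  Function.update v i (!(v i))

/-- The Szabó–Welzl condition: `O` is a unique sink orientation of the `k`-cube. -/
def IsUSO {k : ℕ} (O : (Fin k → Bool) → (Fin k → Bool)) : Prop :=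
  ∀ v w : Fin k → Bool, v ≠ w → ∃ i : Fin k, v i ≠ w i ∧ O v i = O w i

/-- Flip the set `P` of `h`-edges of the orientation `O`; an `h`-edge is
identified (by position) with its endpoint in the lower `h`-facet. -/
noncomputable def flipPh {k : ℕ} (h : Fin k) (P : Set (Fin k → Bool))
    (O : (Fin k → Bool) → (Fin k → Bool)) : (Fin k → Bool) → (Fin k → Bool) :=
  fun v i => if i = h ∧ Function.update v h false ∈ P then !(O v i) else O v i

/-- The partial swap in dimension `h`: the subgraphs induced on the vertices
incident to upwards `h`-edges are exchanged between the two `h`-facets. -/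
def pswapO {k : ℕ} (h : Fin k) (O : (Fin k → Bool) → (Fin k → Bool)) :
    (Fin k → Bool) → (Fin k → Bool) :=
  fun v i => if O v h = true ∧ i ≠ h then O (flipV v h) i else O v i

/-- If flipping the set `P` of `h`-edges of the USO `O` yields a USO
(`P` is a union of `h`-phases), then flipping the corresponding set `P` of
`h`-edges after performing the partial swap in dimension `h` again yields a
USO: partial swaps preserve unions of `h`-phases. -/
theorem stmt19 (k : ℕ) (O : (Fin k → Bool) → (Fin k → Bool))
    (hO : ∀ (v : Fin k → Bool) (i : Fin k), O v i = O (flipV v i) i)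
    (hUSO : IsUSO O) (h : Fin k) (P : Set (Fin k → Bool))
    (hP : IsUSO (flipPh h P O)) :
    IsUSO (flipPh h P (pswapO h O)) := by
  classical
  set σ : (Fin k → Bool) → (Fin k → Bool) :=
    fun u => if O u h = true then flipV u h else u with hσ
  have hflip2 : ∀ u : Fin k → Bool, flipV (flipV u h) h = u := by
    intro u; funext i
    by_cases hi : i = h
    · subst hi; simp [flipV]
    · simp [flipV, Function.update_of_ne hi]
  have hσh : ∀ u, O (σ u) h = O u h := by
    intro u
    by_cases hu : O u h = true
    · simp only [hσ, if_pos hu]; exact (hO u h).symm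
    · simp [hσ, hu]
  have hσi : ∀ u (i : Fin k), i ≠ h → σ u i = u i := by
    intro u i hi
    by_cases hu : O u h = true <;>
      simp [hσ, hu, flipV, Function.update_of_ne hi]
  have hupd : ∀ u, Function.update (σ u) h false = Function.update u h false := by
    intro u; funext i
    by_cases hi : i = h
    · subst hi; simp
    · simp [Function.update_of_ne hi, hσi u i hi]
  have key : ∀ v i, flipPh h P (pswapO h O) v i = flipPh h P O (σ v) i := by
    intro v i
    by_cases hi : i = h
    · rw [hi]
      have h1 : pswapO h O v h = O v h := by
        simp [pswapO]
      simp only [flipPh, h1, hupd, hσh]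
    · have h1 : ¬ (i = h ∧ Function.update v h false ∈ P) := fun hh => hi hh.1
      have h2 : ¬ (i = h ∧ Function.update (σ v) h false ∈ P) := fun hh => hi hh.1
      simp only [flipPh, if_neg h1, if_neg h2]
      by_cases hv : O v h = true
      · simp [pswapO, hσ, hv, hi]
      · simp [pswapO, hσ, hv]
  have hinj : ∀ v w : Fin k → Bool, σ v = σ w → v = w := by
    intro v w hvw
    by_cases hv : O v h = true <;> by_cases hw : O w h = true
    · simp only [hσ, if_pos hv, if_pos hw] at hvw
      have := congrArg (fun u => flipV u h) hvw
      simpa [hflip2] using this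
    · exfalso
      simp only [hσ, if_pos hv, if_neg hw] at hvw
      apply hw
      rw [← hvw, ← hO v h, hv]
    · exfalso
      simp only [hσ, if_neg hv, if_pos hw] at hvw
      apply hv
      rw [hvw, ← hO w h, hw]
    · simpa [hσ, hv, hw] using hvw
  intro v w hvw
  have hσvw : σ v ≠ σ w := fun e => hvw (hinj v w e)
  by_cases hc : O v h = O w h
  · obtain ⟨i, hi1, hi2⟩ := hP (σ v) (σ w) hσvw
    refine ⟨i, ?_, ?_⟩
    · by_cases hih : i = h
      · rw [hih] at hi1 ⊢
        by_cases hvb : O v h = true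
        · have hwb : O w h = true := hc ▸ hvb
          simp only [hσ, if_pos hvb, if_pos hwb, flipV, Function.update_self] at hi1
          intro hvwh; exact hi1 (by rw [hvwh])
        · have hwb : ¬ O w h = true := fun hh => hvb (hc ▸ hh)
          simpa [hσ, hvb, hwb] using hi1
      · rwa [hσi v i hih, hσi w i hih] at hi1
    · rw [key v i, key w i]; exact hi2
  · obtain ⟨i, hi1, hi2⟩ := hUSO (σ v) (σ w) hσvw
    have hih : i ≠ h := by
      intro e; subst e
      rw [hσh, hσh] at hi2
      exact hc hi2
    refine ⟨i, ?_, ?_⟩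
    · rwa [hσi v i hih, hσi w i hih] at hi1
    · rw [key v i, key w i]
      have h1 : ¬ (i = h ∧ Function.update (σ v) h false ∈ P) := fun hh => hih hh.1
      have h2 : ¬ (i = h ∧ Function.update (σ w) h false ∈ P) := fun hh => hih hh.1
      simp only [flipPh, if_neg h1, if_neg h2]
      exact hi2
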